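/- arXiv:2311.05532 — 8 statements merged into one kernel-verified Lean document; each statement's English description precedes it below -/
import Mathlib

section
/- Let h be a probability mass function on a finite set Θ that is not uniform, and for α ≥ 0 define h^(α)(θ) = h(θ)^α / Σ_θ' h(θ')^α. Then the Shannon entropy H(h^(α)) = -Σ_θ h^(α)(θ) log h^(α)(θ) is strictly decreasing in α on [0, ∞). -/
/-!
Writing `x θ = log h θ`, the scaled distribution is the Gibbs distribution `exp (α x) / Z α`,
whose entropy is `log Z α - α E α`, where `E α` is the mean of `x` under it and `E = (log Z)'`.
The mean `E` is strictly increasing: `E a < E b` is a weighted strict Chebyshev inequality for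
the similarly ordered functions `x` and `exp ((b - a) x)`. By the mean value theorem
`log Z b - log Z a = (b - a) E c < (b - a) E b` for some `c ∈ (a, b)`, and `a E a ≤ a E b`
since `a ≥ 0`, so the entropy drops from `a` to `b`.
-/

open Real

section Chebyshev

variable {ι : Type*} [Fintype ι]

theorem two_mul_sum_mul_sum_sub_eq_sum_sum (w f g : ι → ℝ) :
    2 * ((∑ i, w i) * (∑ i, w i * f i * g i) - (∑ i, w i * f i) * ∑ i, w i * g i) =
      ∑ i, ∑ j, w i * w j * ((f i - f j) * (g i - g j)) := by
  set A : ι → ι → ℝ := fun i j => w i * f i * g i * w j - w i * f i * (w j * g j)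
  have hA : ∑ i, ∑ j, A i j =
      (∑ i, w i) * (∑ i, w i * f i * g i) - (∑ i, w i * f i) * ∑ i, w i * g i := by
    simp only [A, Finset.sum_sub_distrib, ← Finset.sum_mul_sum, mul_comm (∑ i, w i)]
  calc 2 * ((∑ i, w i) * (∑ i, w i * f i * g i) - (∑ i, w i * f i) * ∑ i, w i * g i)
      = ∑ i, ∑ j, A i j + ∑ i, ∑ j, A j i := by
        rw [Finset.sum_comm (f := fun i j => A j i), hA]; ring
    _ = ∑ i, ∑ j, w i * w j * ((f i - f j) * (g i - g j)) := by
      rw [← Finset.sum_add_distrib]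
      refine Finset.sum_congr rfl fun i _ => ?_
      rw [← Finset.sum_add_distrib]
      exact Finset.sum_congr rfl fun j _ => by simp only [A]; ring

theorem sum_mul_sum_lt_sum_mul_sum_of_sub_mul_sub {w f g : ι → ℝ} (hw : ∀ i, 0 < w i)
    (hfg : ∀ i j, 0 ≤ (f i - f j) * (g i - g j))
    (hfg' : ∃ i j, 0 < (f i - f j) * (g i - g j)) :
    (∑ i, w i * f i) * (∑ i, w i * g i) < (∑ i, w i) * ∑ i, w i * f i * g i := by
  obtain ⟨i₀, j₀, hpos⟩ := hfg'
  have hterm : ∀ i j, 0 ≤ w i * w j * ((f i - f j) * (g i - g j)) := fun i j =>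
    mul_nonneg (mul_pos (hw i) (hw j)).le (hfg i j)
  have hsum : 0 < ∑ i, ∑ j, w i * w j * ((f i - f j) * (g i - g j)) :=
    Finset.sum_pos' (fun i _ => Finset.sum_nonneg fun j _ => hterm i j)
      ⟨i₀, Finset.mem_univ _, Finset.sum_pos' (fun j _ => hterm i₀ j)
        ⟨j₀, Finset.mem_univ _, mul_pos (mul_pos (hw i₀) (hw j₀)) hpos⟩⟩
  rw [← two_mul_sum_mul_sum_sub_eq_sum_sum] at hsum
  linarith

end Chebyshev

theorem StrictMono.sub_mul_sub_pos {φ : ℝ → ℝ} (hφ : StrictMono φ) {s t : ℝ}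
    (hst : s ≠ t) :
    0 < (s - t) * (φ s - φ t) := by
  rcases hst.lt_or_gt with hlt | hgt
  · exact mul_pos_of_neg_of_neg (sub_neg.2 hlt) (sub_neg.2 (hφ hlt))
  · exact mul_pos (sub_pos.2 hgt) (sub_pos.2 (hφ hgt))

theorem StrictMono.sub_mul_sub_nonneg {φ : ℝ → ℝ} (hφ : StrictMono φ) (s t : ℝ) :
    0 ≤ (s - t) * (φ s - φ t) := by
  rcases eq_or_ne s t with rfl | hst
  · simp
  · exact (hφ.sub_mul_sub_pos hst).le

section Tilted

variable {ι : Type*} [Fintype ι]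

theorem strictMono_sum_mul_exp_div_sum_exp {x : ι → ℝ} (hx : ∃ i j, x i ≠ x j) :
    StrictMono fun α => (∑ i, x i * exp (α * x i)) / ∑ i, exp (α * x i) := by
  intro a b hab
  obtain ⟨i₀, j₀, hne⟩ := hx
  have hφ : StrictMono fun s => exp ((b - a) * s) :=
    exp_strictMono.comp (strictMono_mul_left_of_pos (sub_pos.2 hab))
  have hexp : ∀ i, exp (a * x i) * exp ((b - a) * x i) = exp (b * x i) := fun i => by
    rw [← exp_add]; ring_nf
  have key := sum_mul_sum_lt_sum_mul_sum_of_sub_mul_sub (w := fun i => exp (a * x i))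
    (f := x) (g := fun i => exp ((b - a) * x i)) (fun i => exp_pos _)
    (fun i j => hφ.sub_mul_sub_nonneg _ _) ⟨i₀, j₀, hφ.sub_mul_sub_pos hne⟩
  have hterm : ∀ i, exp (a * x i) * x i * exp ((b - a) * x i) = x i * exp (b * x i) :=
    fun i => by rw [← hexp]; ring
  simp only [hterm, hexp] at key
  have hZ : ∀ c, 0 < ∑ i, exp (c * x i) := fun c =>
    Finset.sum_pos (fun i _ => exp_pos _) ⟨i₀, Finset.mem_univ _⟩
  rw [div_lt_div_iff₀ (hZ a) (hZ b)]
  simp only [mul_comm (exp _) (x _)] at key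
  linarith

variable [Nonempty ι]

theorem hasDerivAt_log_sum_exp (x : ι → ℝ) (α : ℝ) :
    HasDerivAt (fun α => log (∑ i, exp (α * x i)))
      ((∑ i, x i * exp (α * x i)) / ∑ i, exp (α * x i)) α := by
  have hZ : HasDerivAt (fun α => ∑ i, exp (α * x i)) (∑ i, x i * exp (α * x i)) α :=
    HasDerivAt.fun_sum fun i _ => by
      simpa [mul_comm] using ((hasDerivAt_mul_const (x i)).exp)
  exact hZ.log (Finset.sum_pos (fun i _ => exp_pos _) Finset.univ_nonempty).ne'

theorem neg_sum_mul_log_exp_div_sum_exp (x : ι → ℝ) (α : ℝ) :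
    -∑ i, (exp (α * x i) / ∑ j, exp (α * x j)) *
        log (exp (α * x i) / ∑ j, exp (α * x j)) =
      log (∑ i, exp (α * x i)) -
        α * ((∑ i, x i * exp (α * x i)) / ∑ i, exp (α * x i)) := by
  set Z := ∑ j, exp (α * x j)
  have hZ : 0 < Z := Finset.sum_pos (fun i _ => exp_pos _) Finset.univ_nonempty
  simp only [log_div (exp_pos _).ne' hZ.ne', log_exp]
  calc -∑ i, exp (α * x i) / Z * (α * x i - log Z)
      = (∑ i, exp (α * x i)) / Z * log Z - α * ((∑ i, x i * exp (α * x i)) / Z) := by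
        rw [Finset.sum_div, Finset.sum_div, Finset.sum_mul, Finset.mul_sum,
          ← Finset.sum_neg_distrib, ← Finset.sum_sub_distrib]
        exact Finset.sum_congr rfl fun i _ => by ring
    _ = log Z - α * ((∑ i, x i * exp (α * x i)) / Z) := by rw [div_self hZ.ne', one_mul]

end Tilted

theorem strictAntiOn_sub_mul_deriv {f f' : ℝ → ℝ} (hf : ∀ x, HasDerivAt f (f' x) x)
    (hf' : StrictMono f') : StrictAntiOn (fun x => f x - x * f' x) (Set.Ici 0) := by
  intro a ha b _ hab
  obtain ⟨c, hc, hslope⟩ := exists_hasDerivAt_eq_slope f f' hab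
    (fun x _ => (hf x).continuousAt.continuousWithinAt) (fun x _ => hf x)
  rw [eq_div_iff (sub_pos.2 hab).ne'] at hslope
  have h1 : f' c < f' b := hf' hc.2
  have h2 : f' a < f' b := hf' hab
  nlinarith [mul_pos (sub_pos.2 hab) (sub_pos.2 h1),
    mul_nonneg (show (0 : ℝ) ≤ a from ha) (sub_pos.2 h2).le]

theorem entropy_alpha_scaled_strictAnti_general
    {Θ : Type*} [Fintype Θ]
    (h : Θ → ℝ)
    (hpos : ∀ θ, 0 < h θ)
    (hnonunif : ∃ θ₁ θ₂, h θ₁ ≠ h θ₂) :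
    StrictAntiOn
      (fun α : ℝ =>
        -∑ θ, (h θ ^ α / ∑ θ', h θ' ^ α) *
          Real.log (h θ ^ α / ∑ θ', h θ' ^ α))
      (Set.Ici 0) := by
  obtain ⟨θ₁, θ₂, hne⟩ := hnonunif
  have : Nonempty Θ := ⟨θ₁⟩
  have hrpow : ∀ α θ, h θ ^ α = exp (α * log (h θ)) := fun α θ => by
    rw [rpow_def_of_pos (hpos θ), mul_comm]
  have hlog : log (h θ₁) ≠ log (h θ₂) := fun heq =>
    hne (log_injOn_pos (hpos θ₁) (hpos θ₂) heq)
  simp only [hrpow, neg_sum_mul_log_exp_div_sum_exp]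
  exact strictAntiOn_sub_mul_deriv (hasDerivAt_log_sum_exp _)
    (strictMono_sum_mul_exp_div_sum_exp ⟨θ₁, θ₂, hlog⟩)

/-- For a strictly positive, non-uniform probability mass function `h`
on a finite nonempty set, the Shannon entropy of the α-scaled distribution
`h^(α)(θ) = h(θ)^α / Σ_{θ'} h(θ')^α` is strictly decreasing in `α` on `[0, ∞)`. -/
theorem entropy_alpha_scaled_strictAnti
    {Θ : Type*} [Fintype Θ] [Nonempty Θ]
    (h : Θ → ℝ)
    (hpos : ∀ θ, 0 < h θ)
    (hsum : ∑ θ, h θ = 1)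
    (hnonunif : ∃ θ₁ θ₂, h θ₁ ≠ h θ₂) :
    StrictAntiOn
      (fun α : ℝ =>
        -∑ θ, (h θ ^ α / ∑ θ', h θ' ^ α) *
          Real.log (h θ ^ α / ∑ θ', h θ' ^ α))
      (Set.Ici 0) :=
  entropy_alpha_scaled_strictAnti_general h hpos hnonunif
end

section
/- Let h be a non-uniform probability mass function on a finite set with h(θ) > 0 for all θ, and define the α-scaled distribution h^(α)(θ) = h(θ)^α / Σ h(θ')^α. If 0 ≤ α < 1 then H(h^(α)) > H(h), and if α > 1 then H(h^(α)) < H(h), where H is Shannon entropy. -/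
open Real BigOperators

/-- Strict Gibbs inequality for positive pmfs that differ somewhere. -/
lemma gibbs_strict {Θ : Type*} [Fintype Θ] (p q : Θ → ℝ)
    (hp : ∀ θ, 0 < p θ) (hq : ∀ θ, 0 < q θ)
    (hps : ∑ θ, p θ = 1) (hqs : ∑ θ, q θ = 1)
    (hne : ∃ θ, p θ ≠ q θ) :
    ∑ θ, p θ * Real.log (q θ) < ∑ θ, p θ * Real.log (p θ) := by
  have key : ∑ θ, (p θ * Real.log (q θ) - p θ * Real.log (p θ)) < ∑ θ, (q θ - p θ) := by
    obtain ⟨θ₀, hθ₀⟩ := hne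
    apply Finset.sum_lt_sum
    · intro i _
      have hlog : Real.log (q i) - Real.log (p i) = Real.log (q i / p i) :=
        (Real.log_div (hq i).ne' (hp i).ne').symm
      rw [← mul_sub, hlog]
      have hle : Real.log (q i / p i) ≤ q i / p i - 1 :=
        Real.log_le_sub_one_of_pos (div_pos (hq i) (hp i))
      have := mul_le_mul_of_nonneg_left hle (hp i).le
      calc p i * Real.log (q i / p i) ≤ p i * (q i / p i - 1) := this
        _ = q i - p i := by field_simp [(hp i).ne']
    · refine ⟨θ₀, Finset.mem_univ _, ?_⟩
      have hne1 : q θ₀ / p θ₀ ≠ 1 := by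
        intro hcon
        exact hθ₀ ((div_eq_one_iff_eq (hp θ₀).ne').mp hcon).symm
      have hlog : Real.log (q θ₀) - Real.log (p θ₀) = Real.log (q θ₀ / p θ₀) :=
        (Real.log_div (hq θ₀).ne' (hp θ₀).ne').symm
      rw [← mul_sub, hlog]
      have hlt : Real.log (q θ₀ / p θ₀) < q θ₀ / p θ₀ - 1 :=
        Real.log_lt_sub_one_of_pos (div_pos (hq θ₀) (hp θ₀)) hne1
      have := mul_lt_mul_of_pos_left hlt (hp θ₀)
      calc p θ₀ * Real.log (q θ₀ / p θ₀) < p θ₀ * (q θ₀ / p θ₀ - 1) := this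
        _ = q θ₀ - p θ₀ := by field_simp [(hp θ₀).ne']
  rw [Finset.sum_sub_distrib, Finset.sum_sub_distrib, hps, hqs] at key
  linarith

/-- For a strictly positive non-uniform pmf `h` on a finite set with
α-scaling `h^(α)(θ) = h(θ)^α / Σ h(θ')^α`: if `0 ≤ α < 1` then `H(h^(α)) > H(h)`,
and if `α > 1` then `H(h^(α)) < H(h)`, where `H` is Shannon entropy. -/
theorem entropy_alpha_scaled_compare
    {Θ : Type*} [Fintype Θ] [Nonempty Θ]
    (h : Θ → ℝ)
    (hpos : ∀ θ, 0 < h θ)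
    (hsum : ∑ θ, h θ = 1)
    (hnonunif : ∃ θ₁ θ₂, h θ₁ ≠ h θ₂)
    (α : ℝ) :
    (0 ≤ α → α < 1 →
      -∑ θ, h θ * Real.log (h θ) <
        -∑ θ, (h θ ^ α / ∑ θ', h θ' ^ α) *
          Real.log (h θ ^ α / ∑ θ', h θ' ^ α)) ∧
    (1 < α →
      -∑ θ, (h θ ^ α / ∑ θ', h θ' ^ α) *
        Real.log (h θ ^ α / ∑ θ', h θ' ^ α) <
        -∑ θ, h θ * Real.log (h θ)) := by
  set Z : ℝ := ∑ θ', h θ' ^ α with hZ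
  have hZpos : 0 < Z := Finset.sum_pos (fun i _ => Real.rpow_pos_of_pos (hpos i) α)
    Finset.univ_nonempty
  set p : Θ → ℝ := fun θ => h θ ^ α / Z with hpdef
  have hppos : ∀ θ, 0 < p θ := fun θ => div_pos (Real.rpow_pos_of_pos (hpos θ) α) hZpos
  have hpsum : ∑ θ, p θ = 1 := by
    simp only [hpdef]
    rw [← Finset.sum_div, ← hZ, div_self hZpos.ne']
  have hlogp : ∀ θ, Real.log (p θ) = α * Real.log (h θ) - Real.log Z := by
    intro θ
    simp only [hpdef]
    rw [Real.log_div (Real.rpow_pos_of_pos (hpos θ) α).ne' hZpos.ne',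
      Real.log_rpow (hpos θ)]
  set S : ℝ := ∑ θ, h θ * Real.log (h θ) with hS
  set E : ℝ := ∑ θ, p θ * Real.log (h θ) with hE
  have sum1 : ∑ θ, h θ * Real.log (p θ) = α * S - Real.log Z := by
    calc ∑ θ, h θ * Real.log (p θ)
        = ∑ θ, (α * (h θ * Real.log (h θ)) - Real.log Z * h θ) := by
          apply Finset.sum_congr rfl
          intro θ _
          rw [hlogp θ]; ring
      _ = α * S - Real.log Z := by
          rw [Finset.sum_sub_distrib, ← Finset.mul_sum, ← Finset.mul_sum, hsum, mul_one]
  have sum2 : ∑ θ, p θ * Real.log (p θ) = α * E - Real.log Z := by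
    calc ∑ θ, p θ * Real.log (p θ)
        = ∑ θ, (α * (p θ * Real.log (h θ)) - Real.log Z * p θ) := by
          apply Finset.sum_congr rfl
          intro θ _
          rw [hlogp θ]; ring
      _ = α * E - Real.log Z := by
          rw [Finset.sum_sub_distrib, ← Finset.mul_sum, ← Finset.mul_sum, hpsum, mul_one]
  have hne : α ≠ 1 → ∃ θ, p θ ≠ h θ := by
    intro hα1
    by_contra hcon
    push_neg at hcon
    obtain ⟨θ₁, θ₂, h12⟩ := hnonunif
    have key : ∀ θ, (α - 1) * Real.log (h θ) = Real.log Z := by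
      intro θ
      have := hcon θ
      simp only [hpdef] at this
      have h1 : h θ ^ α = h θ * Z := by
        field_simp at this
        linarith
      have h2 := congrArg Real.log h1
      rw [Real.log_rpow (hpos θ), Real.log_mul (hpos θ).ne' hZpos.ne'] at h2
      linarith
    have hlogeq : Real.log (h θ₁) = Real.log (h θ₂) := by
      have k1 := key θ₁
      have k2 := key θ₂
      have hα1' : α - 1 ≠ 0 := sub_ne_zero_of_ne hα1
      have := k1.trans k2.symm
      exact mul_left_cancel₀ hα1' this
    exact h12 (Real.log_injOn_pos (Set.mem_Ioi.mpr (hpos θ₁))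
      (Set.mem_Ioi.mpr (hpos θ₂)) hlogeq)
  constructor
  · intro hα0 hα1
    have hne' := hne (by linarith)
    have hne'' : ∃ θ, h θ ≠ p θ := by obtain ⟨θ, hθ⟩ := hne'; exact ⟨θ, hθ.symm⟩
    have g1 : ∑ θ, h θ * Real.log (p θ) < S :=
      gibbs_strict h p hpos hppos hsum hpsum hne''
    have g2 : ∑ θ, p θ * Real.log (h θ) < ∑ θ, p θ * Real.log (p θ) :=
      gibbs_strict p h hppos hpos hpsum hsum hne'
    rw [sum1] at g1
    rw [sum2] at g2
    -- g1 : α * S - log Z < S ; g2 : E < α * E - log Z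
    -- goal : -S < -(α * E - log Z)
    rw [sum2]
    nlinarith [mul_le_mul_of_nonneg_left (le_of_lt g2) hα0,
      mul_lt_mul_of_pos_left g2 (show (0:ℝ) < 1 - α by linarith)]
  · intro hα1
    have hne' := hne (by linarith)
    have hne'' : ∃ θ, h θ ≠ p θ := by obtain ⟨θ, hθ⟩ := hne'; exact ⟨θ, hθ.symm⟩
    have g1 : ∑ θ, h θ * Real.log (p θ) < S :=
      gibbs_strict h p hpos hppos hsum hpsum hne''
    have g2 : ∑ θ, p θ * Real.log (h θ) < ∑ θ, p θ * Real.log (p θ) :=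
      gibbs_strict p h hppos hpos hpsum hsum hne'
    rw [sum1] at g1
    rw [sum2] at g2
    -- g1 : α * S - log Z < S  i.e. (α-1) S < log Z
    -- g2 : E < α * E - log Z  i.e. log Z < (α-1) E
    -- so S < E, and α E - log Z > α E - (α-1) E = E > S
    rw [sum2]
    nlinarith [mul_lt_mul_of_pos_left g2 (show (0:ℝ) < α - 1 by linarith)]
end

section
/- Let h be a strictly positive non-uniform probability mass function on a finite set Θ and h^(α)(θ) = h(θ)^α / Σ h(θ')^α. Then the map α ↦ KL(h ‖ h^(α)) is convex on [0, ∞), strictly decreasing on [0, 1), and strictly increasing on (1, ∞), where KL denotes the Kullback–Leibler divergence KL(p ‖ q) = Σ_θ p(θ) log(p(θ)/q(θ)). -/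
/-!
`KL(h ‖ h^(α)) = (1 - α) ∑ h log h + log ∑ h^α` is an affine function plus a log-partition
function, and the latter is convex by Hölder's inequality. The divergence vanishes at `α = 1` and,
by Gibbs' inequality, is positive elsewhere, because `h^(α) = h` makes `h^(α - 1)` constant, which
a non-uniform `h` only allows for `α = 1`. A convex function with a strict minimum at `1` is
strictly decreasing to its left and strictly increasing to its right.
-/

open Real BigOperators

open Finset Set InformationTheory

section

variable {ι : Type*} [Fintype ι]

theorem sum_rpow_pos [Nonempty ι] {w : ι → ℝ} (hw : ∀ i, 0 < w i) (α : ℝ) :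
    0 < ∑ i, w i ^ α :=
  sum_pos (fun i _ ↦ rpow_pos_of_pos (hw i) α) univ_nonempty

theorem sum_mul_log_div_pos {p q : ι → ℝ} (hp : ∀ i, 0 ≤ p i) (hq : ∀ i, 0 < q i)
    (hsum : ∑ i, p i = ∑ i, q i) (hne : p ≠ q) :
    0 < ∑ i, p i * log (p i / q i) := by
  have hterm : ∀ i, p i * log (p i / q i) = q i * klFun (p i / q i) + (p i - q i) := fun i ↦ by
    have := (hq i).ne'
    rw [klFun_apply]
    field_simp
    ring
  rw [sum_congr rfl fun i _ ↦ hterm i, sum_add_distrib, sum_sub_distrib, hsum, sub_self, add_zero]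
  have hpq : ∀ j, 0 ≤ p j / q j := fun j ↦ div_nonneg (hp j) (hq j).le
  obtain ⟨i, hi⟩ := Function.ne_iff.mp hne
  have hkl : 0 < klFun (p i / q i) := by
    refine (klFun_nonneg (hpq i)).lt_of_ne' ?_
    rwa [Ne, klFun_eq_zero_iff (hpq i), div_eq_one_iff_eq (hq i).ne']
  exact sum_pos' (fun j _ ↦ mul_nonneg (hq j).le (klFun_nonneg (hpq j)))
    ⟨i, mem_univ i, mul_pos (hq i) hkl⟩

theorem sum_rpow_le_sum_rpow_pow_mul_sum_rpow_pow {w : ι → ℝ} (hw : ∀ i, 0 < w i) (x y : ℝ)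
    {a b : ℝ} (ha : 0 < a) (hb : 0 < b) (hab : a + b = 1) :
    ∑ i, w i ^ (a * x + b * y) ≤ (∑ i, w i ^ x) ^ a * (∑ i, w i ^ y) ^ b := by
  have hpow : ∀ {c : ℝ} (z : ℝ), 0 < c → ∀ i, (w i ^ (c * z)) ^ c⁻¹ = w i ^ z := by
    intro c z hc i
    rw [← rpow_mul (hw i).le, mul_comm c, mul_assoc, mul_inv_cancel₀ hc.ne', mul_one]
  have hHolder := inner_le_Lp_mul_Lq_of_nonneg univ (Real.HolderConjugate.inv_inv ha hb hab)
    (f := fun i ↦ w i ^ (a * x)) (g := fun i ↦ w i ^ (b * y))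
    (fun i _ ↦ (rpow_pos_of_pos (hw i) _).le) (fun i _ ↦ (rpow_pos_of_pos (hw i) _).le)
  simpa only [← rpow_add (hw _), hpow x ha, hpow y hb, one_div, inv_inv] using hHolder

theorem convexOn_log_sum_rpow [Nonempty ι] {w : ι → ℝ} (hw : ∀ i, 0 < w i) :
    ConvexOn ℝ Set.univ fun α : ℝ ↦ log (∑ i, w i ^ α) := by
  refine convexOn_iff_forall_pos.mpr ⟨convex_univ, fun x _ y _ a b ha hb hab ↦ ?_⟩
  calc log (∑ i, w i ^ (a • x + b • y))
      ≤ log ((∑ i, w i ^ x) ^ a * (∑ i, w i ^ y) ^ b) :=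
        log_le_log (sum_rpow_pos hw _) (sum_rpow_le_sum_rpow_pow_mul_sum_rpow_pow hw x y ha hb hab)
    _ = a • log (∑ i, w i ^ x) + b • log (∑ i, w i ^ y) := by
        rw [log_mul (rpow_pos_of_pos (sum_rpow_pos hw x) a).ne'
            (rpow_pos_of_pos (sum_rpow_pos hw y) b).ne',
          log_rpow (sum_rpow_pos hw x), log_rpow (sum_rpow_pos hw y), smul_eq_mul, smul_eq_mul]

theorem sum_mul_log_div_rpow_div_sum [Nonempty ι] {h : ι → ℝ} (hpos : ∀ i, 0 < h i)
    (hsum : ∑ i, h i = 1) (α : ℝ) :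
    ∑ i, h i * log (h i / (h i ^ α / ∑ j, h j ^ α)) =
      (1 - α) * ∑ i, h i * log (h i) + log (∑ j, h j ^ α) := by
  have hZ := sum_rpow_pos hpos α
  have hterm : ∀ i, h i * log (h i / (h i ^ α / ∑ j, h j ^ α)) =
      (1 - α) * (h i * log (h i)) + h i * log (∑ j, h j ^ α) := fun i ↦ by
    rw [log_div (hpos i).ne' (div_pos (rpow_pos_of_pos (hpos i) α) hZ).ne',
      log_div (rpow_pos_of_pos (hpos i) α).ne' hZ.ne', log_rpow (hpos i)]
    ring
  rw [sum_congr rfl fun i _ ↦ hterm i, sum_add_distrib, ← mul_sum, ← sum_mul, hsum, one_mul]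

theorem rpow_div_sum_rpow_ne_self {h : ι → ℝ} (hpos : ∀ i, 0 < h i)
    (hnonunif : ∃ i j, h i ≠ h j) {α : ℝ} (hα : α ≠ 1) :
    (fun i ↦ h i ^ α / ∑ j, h j ^ α) ≠ h := by
  intro heq
  obtain ⟨i, j, hij⟩ := hnonunif
  have : Nonempty ι := ⟨i⟩
  have hconst : ∀ k, h k ^ (α - 1) = ∑ k, h k ^ α := fun k ↦ by
    rw [rpow_sub_one (hpos k).ne', div_eq_iff (hpos k).ne',
      (div_eq_iff (sum_rpow_pos hpos α).ne').mp (congrFun heq k), mul_comm]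
  exact hij (rpow_left_injOn (sub_ne_zero.mpr hα) (hpos i).le (hpos j).le
    ((hconst i).trans (hconst j).symm))

end

section

variable {s : Set ℝ} {f : ℝ → ℝ} {c : ℝ}

theorem ConvexOn.strictAntiOn_inter_Iic_of_strictMin (hf : ConvexOn ℝ s f) (hc : c ∈ s)
    (hmin : ∀ x ∈ s, x ≠ c → f c < f x) : StrictAntiOn f (s ∩ Iic c) := by
  rintro x ⟨hx, -⟩ y ⟨hy, hyc : y ≤ c⟩ hxy
  obtain rfl | hyc := hyc.eq_or_lt
  · exact hmin x hx hxy.ne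
  · refine hf.lt_left_of_right_lt hx hc ?_ (hmin y hy hyc.ne)
    rw [openSegment_eq_Ioo (hxy.trans hyc)]
    exact ⟨hxy, hyc⟩

theorem ConvexOn.strictMonoOn_inter_Ici_of_strictMin (hf : ConvexOn ℝ s f) (hc : c ∈ s)
    (hmin : ∀ x ∈ s, x ≠ c → f c < f x) : StrictMonoOn f (s ∩ Ici c) := by
  rintro x ⟨hx, hcx : c ≤ x⟩ y ⟨hy, -⟩ hxy
  obtain rfl | hcx := hcx.eq_or_lt
  · exact hmin y hy hxy.ne'
  · refine hf.lt_right_of_left_lt hc hy ?_ (hmin x hx hcx.ne')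
    rw [openSegment_eq_Ioo (hcx.trans hxy)]
    exact ⟨hcx, hxy⟩

end

/-- For a strictly positive non-uniform pmf `h` on a finite set,
with `h^(α)(θ) = h(θ)^α / Σ h(θ')^α`, the map `α ↦ KL(h ‖ h^(α))` is convex on
`[0, ∞)`, strictly decreasing on `[0, 1)`, and strictly increasing on `(1, ∞)`. -/
theorem kl_to_alpha_scaled_convex_monotone
    {Θ : Type*} [Fintype Θ] [Nonempty Θ]
    (h : Θ → ℝ)
    (hpos : ∀ θ, 0 < h θ)
    (hsum : ∑ θ, h θ = 1)
    (hnonunif : ∃ θ₁ θ₂, h θ₁ ≠ h θ₂) :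
    ConvexOn ℝ (Set.Ici 0)
      (fun α : ℝ => ∑ θ, h θ * Real.log (h θ / (h θ ^ α / ∑ θ', h θ' ^ α))) ∧
    StrictAntiOn
      (fun α : ℝ => ∑ θ, h θ * Real.log (h θ / (h θ ^ α / ∑ θ', h θ' ^ α)))
      (Set.Ico 0 1) ∧
    StrictMonoOn
      (fun α : ℝ => ∑ θ, h θ * Real.log (h θ / (h θ ^ α / ∑ θ', h θ' ^ α)))
      (Set.Ioi 1) := by
  set F := fun α : ℝ ↦ ∑ θ, h θ * log (h θ / (h θ ^ α / ∑ θ', h θ' ^ α))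
  set C := ∑ θ, h θ * log (h θ)
  have haffine : ConvexOn ℝ Set.univ fun α : ℝ ↦ (1 - α) * C :=
    ⟨convex_univ, fun x _ y _ a b _ _ hab ↦ le_of_eq (by
      simp only [smul_eq_mul]; linear_combination (-C) * hab)⟩
  have hconv : ConvexOn ℝ Set.univ F :=
    (haffine.add (convexOn_log_sum_rpow hpos)).congr fun α _ ↦
      (sum_mul_log_div_rpow_div_sum hpos hsum α).symm
  have hmin : ∀ α ∈ Set.univ, α ≠ 1 → F 1 < F α := fun α _ hα ↦ by
    have hF1 : F 1 = 0 := by simp [F, hsum]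
    rw [hF1]
    refine sum_mul_log_div_pos (fun θ ↦ (hpos θ).le)
      (fun θ ↦ div_pos (rpow_pos_of_pos (hpos θ) α) (sum_rpow_pos hpos α)) ?_
      (rpow_div_sum_rpow_ne_self hpos hnonunif hα).symm
    rw [← sum_div, div_self (sum_rpow_pos hpos α).ne', hsum]
  refine ⟨hconv.subset (subset_univ _) (convex_Ici 0), ?_, ?_⟩
  · exact (hconv.strictAntiOn_inter_Iic_of_strictMin (mem_univ 1) hmin).mono
      fun x hx ↦ ⟨mem_univ x, hx.2.le⟩
  · exact (hconv.strictMonoOn_inter_Ici_of_strictMin (mem_univ 1) hmin).mono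
      fun x hx ↦ ⟨mem_univ x, (mem_Ioi.mp hx).le⟩
end

section
/- Let h be a strictly positive probability mass function on a finite set Θ and h^(α) its α-scaling. Then the symmetrized (Jeffrey's) divergence satisfies KL(h^(α) ‖ h) + KL(h ‖ h^(α)) = (α − 1)·[ Σ_θ h^(α)(θ) log h(θ) − Σ_θ h(θ) log h(θ) ]. Consequently, if h is not uniform, then for α > 1 one has Σ_θ h^(α)(θ) log h(θ) > Σ_θ h(θ) log h(θ), and for 0 ≤ α < 1 the reverse strict inequality holds. -/
open Real BigOperators

/-- For a strictly positive pmf `h` on a finite set with α-scaling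
`h^(α)`, Jeffrey's divergence satisfies
`KL(h^(α)‖h) + KL(h‖h^(α)) = (α−1)·[Σ h^(α) log h − Σ h log h]`.
Consequently, if `h` is not uniform, then for `α > 1` one has
`Σ h^(α) log h > Σ h log h`, and for `0 ≤ α < 1` the reverse strict inequality. -/
theorem jeffreys_divergence_alpha_scaled
    {Θ : Type*} [Fintype Θ] [Nonempty Θ]
    (h : Θ → ℝ)
    (hpos : ∀ θ, 0 < h θ)
    (hsum : ∑ θ, h θ = 1)
    (α : ℝ) (hα : 0 ≤ α) :
    ((∑ θ, (h θ ^ α / ∑ θ', h θ' ^ α) *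
        Real.log ((h θ ^ α / ∑ θ', h θ' ^ α) / h θ)) +
      (∑ θ, h θ * Real.log (h θ / (h θ ^ α / ∑ θ', h θ' ^ α))) =
      (α - 1) *
        ((∑ θ, (h θ ^ α / ∑ θ', h θ' ^ α) * Real.log (h θ)) -
          ∑ θ, h θ * Real.log (h θ))) ∧
    ((∃ θ₁ θ₂, h θ₁ ≠ h θ₂) → 1 < α →
      (∑ θ, h θ * Real.log (h θ)) <
        ∑ θ, (h θ ^ α / ∑ θ', h θ' ^ α) * Real.log (h θ)) ∧
    ((∃ θ₁ θ₂, h θ₁ ≠ h θ₂) → α < 1 →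
      (∑ θ, (h θ ^ α / ∑ θ', h θ' ^ α) * Real.log (h θ)) <
        ∑ θ, h θ * Real.log (h θ)) := by
  set S : ℝ := ∑ θ', h θ' ^ α with hSdef
  have hSpos : 0 < S :=
    Finset.sum_pos (fun θ _ => Real.rpow_pos_of_pos (hpos θ) α) Finset.univ_nonempty
  set g : Θ → ℝ := fun θ => h θ ^ α / S with hgdef
  have hgpos : ∀ θ, 0 < g θ := fun θ =>
    div_pos (Real.rpow_pos_of_pos (hpos θ) α) hSpos
  have hgsum : ∑ θ, g θ = 1 := by
    simp only [hgdef]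
    rw [← Finset.sum_div, ← hSdef, div_self hSpos.ne']
  have hlog : ∀ θ, Real.log (g θ) - Real.log (h θ)
      = (α - 1) * Real.log (h θ) - Real.log S := by
    intro θ
    simp only [hgdef]
    rw [Real.log_div (Real.rpow_pos_of_pos (hpos θ) α).ne' hSpos.ne',
      Real.log_rpow (hpos θ)]
    ring
  have e1 : ∀ θ, g θ * Real.log (g θ / h θ)
      = (α - 1) * (g θ * Real.log (h θ)) - g θ * Real.log S := by
    intro θ
    rw [Real.log_div (hgpos θ).ne' (hpos θ).ne', hlog θ]; ring
  have e2 : ∀ θ, h θ * Real.log (h θ / g θ)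
      = -((α - 1) * (h θ * Real.log (h θ)) - h θ * Real.log S) := by
    intro θ
    rw [Real.log_div (hpos θ).ne' (hgpos θ).ne',
      show Real.log (h θ) - Real.log (g θ)
        = -(Real.log (g θ) - Real.log (h θ)) by ring, hlog θ]
    ring
  have main : (∑ θ, g θ * Real.log (g θ / h θ)) + (∑ θ, h θ * Real.log (h θ / g θ))
      = (α - 1) * ((∑ θ, g θ * Real.log (h θ)) - ∑ θ, h θ * Real.log (h θ)) := by
    simp only [fun θ => e1 θ, fun θ => e2 θ]
    rw [Finset.sum_sub_distrib, Finset.sum_neg_distrib, Finset.sum_sub_distrib,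
      ← Finset.mul_sum, ← Finset.mul_sum, ← Finset.sum_mul, ← Finset.sum_mul,
      hgsum, hsum]
    ring
  refine ⟨main, ?_, ?_⟩ <;> rintro ⟨θ₁, θ₂, hne⟩ hα1
  all_goals {
    have hexists : ∃ θ, g θ ≠ h θ := by
      by_contra hc
      push_neg at hc
      apply hne
      have hne1 : α - 1 ≠ 0 := sub_ne_zero.mpr (by rintro rfl; exact lt_irrefl 1 hα1)
      have hconst : ∀ θ, Real.log (h θ) = Real.log S / (α - 1) := by
        intro θ
        have := hlog θ
        rw [hc θ] at this
        have h2 : (α - 1) * Real.log (h θ) = Real.log S := by linarith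
        rw [eq_div_iff hne1]
        linarith [h2]
      have := (hconst θ₁).trans (hconst θ₂).symm
      have := Real.exp_log (hpos θ₁) ▸ Real.exp_log (hpos θ₂) ▸ congrArg Real.exp this
      linarith [Real.exp_log (hpos θ₁), Real.exp_log (hpos θ₂),
        congrArg Real.exp ((hconst θ₁).trans (hconst θ₂).symm)]
    obtain ⟨θ₀, hθ₀⟩ := hexists
    have hterm_nonneg : ∀ θ ∈ Finset.univ,
        0 ≤ (g θ - h θ) * (Real.log (g θ) - Real.log (h θ)) := by
      intro θ _
      rcases lt_trichotomy (g θ) (h θ) with hlt | heq | hgt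
      · have := Real.log_lt_log (hgpos θ) hlt
        nlinarith
      · rw [heq]; simp
      · have := Real.log_lt_log (hpos θ) hgt
        nlinarith
    have hterm_pos : 0 < (g θ₀ - h θ₀) * (Real.log (g θ₀) - Real.log (h θ₀)) := by
      rcases lt_or_gt_of_ne hθ₀ with hlt | hgt
      · have := Real.log_lt_log (hgpos θ₀) hlt
        nlinarith
      · have := Real.log_lt_log (hpos θ₀) hgt
        nlinarith
    have hJpos : 0 < ∑ θ, (g θ - h θ) * (Real.log (g θ) - Real.log (h θ)) :=
      Finset.sum_pos' hterm_nonneg ⟨θ₀, Finset.mem_univ θ₀, hterm_pos⟩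
    have hJeq : (∑ θ, (g θ - h θ) * (Real.log (g θ) - Real.log (h θ)))
        = (∑ θ, g θ * Real.log (g θ / h θ)) + (∑ θ, h θ * Real.log (h θ / g θ)) := by
      rw [← Finset.sum_add_distrib]
      refine Finset.sum_congr rfl fun θ _ => ?_
      rw [Real.log_div (hgpos θ).ne' (hpos θ).ne',
        Real.log_div (hpos θ).ne' (hgpos θ).ne']
      ring
    rw [hJeq, main] at hJpos
    nlinarith
  }
end

section
/- Let h₀ and h be strictly positive probability mass functions on a finite set Θ, with h not uniform, and suppose Σ_θ [h₀(θ) − h(θ)]·log h(θ) ≠ 0. Then there exists α ≥ 0 such that KL(h₀ ‖ h^(α)) < KL(h₀ ‖ h), where h^(α)(θ) = h(θ)^α / Σ h(θ')^α. -/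
open Real BigOperators

/-!
Up to the constant `∑ h₀ log h₀`, `KL(h₀ ‖ h^(α))` equals `log (∑ h^α) - α ∑ h₀ log h`, a
differentiable function of `α` whose derivative at `α = 1` is `-∑ (h₀ - h) log h ≠ 0`.
Since `α = 1` is interior to `[0, ∞)`, Fermat's theorem says it is not a minimum there.
-/

section ScaledKL

variable {Θ : Type*} [Fintype Θ]

lemma sum_rpow_pos_s6 [Nonempty Θ] {q : Θ → ℝ} (hq : ∀ θ, 0 < q θ) (α : ℝ) :
    0 < ∑ θ, q θ ^ α :=
  Finset.sum_pos (fun θ _ => rpow_pos_of_pos (hq θ) α) Finset.univ_nonempty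

lemma hasDerivAt_log_sum_rpow [Nonempty Θ] {q : Θ → ℝ} (hq : ∀ θ, 0 < q θ) (a : ℝ) :
    HasDerivAt (fun α => log (∑ θ, q θ ^ α))
      ((∑ θ, q θ ^ a * log (q θ)) / ∑ θ, q θ ^ a) a := by
  have hsum : HasDerivAt (fun α => ∑ θ, q θ ^ α) (∑ θ, q θ ^ a * log (q θ)) a :=
    HasDerivAt.fun_sum fun θ _ => (hasStrictDerivAt_const_rpow (hq θ) a).hasDerivAt
  exact hsum.log (sum_rpow_pos_s6 hq a).ne'

lemma mul_log_div_eq_sub {p x : ℝ} (hx : x ≠ 0) :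
    p * log (p / x) = p * log p - p * log x := by
  rcases eq_or_ne p 0 with rfl | hp
  · simp
  · rw [log_div hp hx]
    ring

lemma sum_mul_log_div_rpow_div_sum_s6 [Nonempty Θ] {p q : Θ → ℝ} (hq : ∀ θ, 0 < q θ)
    (hp : ∑ θ, p θ = 1) (α : ℝ) :
    ∑ θ, p θ * log (p θ / (q θ ^ α / ∑ θ', q θ' ^ α)) =
      ∑ θ, p θ * log (p θ) - α * ∑ θ, p θ * log (q θ) + log (∑ θ, q θ ^ α) := by
  have hS := (sum_rpow_pos_s6 hq α).ne'
  have hterm : ∀ θ, p θ * log (p θ / (q θ ^ α / ∑ θ', q θ' ^ α)) =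
      p θ * log (p θ) - α * (p θ * log (q θ)) + p θ * log (∑ θ', q θ' ^ α) := fun θ => by
    have hqα := (rpow_pos_of_pos (hq θ) α).ne'
    rw [mul_log_div_eq_sub (div_ne_zero hqα hS), log_div hqα hS, log_rpow (hq θ)]
    ring
  simp only [hterm, Finset.sum_add_distrib, Finset.sum_sub_distrib, ← Finset.mul_sum,
    ← Finset.sum_mul, hp, one_mul]

end ScaledKL

lemma exists_lt_of_hasDerivAt_ne_zero {f : ℝ → ℝ} {f' x : ℝ} {s : Set ℝ}
    (hf : HasDerivAt f f' x) (hf' : f' ≠ 0) (hs : s ∈ nhds x) :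
    ∃ y ∈ s, f y < f x := by
  by_contra! hmin
  have hloc : IsLocalMin f x := Filter.mem_of_superset hs hmin
  exact hf' (hloc.hasDerivAt_eq_zero hf)

theorem exists_alpha_scaled_closer_general
    {Θ : Type*} [Fintype Θ]
    (h₀ h : Θ → ℝ)
    (hpos : ∀ θ, 0 < h θ)
    (h₀sum : ∑ θ, h₀ θ = 1)
    (hsum : ∑ θ, h θ = 1)
    (hderiv : ∑ θ, (h₀ θ - h θ) * Real.log (h θ) ≠ 0) :
    ∃ α : ℝ, 0 ≤ α ∧
      (∑ θ, h₀ θ * Real.log (h₀ θ / (h θ ^ α / ∑ θ', h θ' ^ α))) <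
        ∑ θ, h₀ θ * Real.log (h₀ θ / h θ) := by
  have : Nonempty Θ :=
    Finset.univ_nonempty_iff.mp (Finset.nonempty_of_sum_ne_zero (hsum ▸ one_ne_zero))
  set c := ∑ θ, h₀ θ * log (h θ)
  have hg : HasDerivAt (fun α => log (∑ θ, h θ ^ α) - α * c)
      (∑ θ, h θ * log (h θ) - c) 1 := by
    simpa [hsum] using (hasDerivAt_log_sum_rpow hpos 1).fun_sub ((hasDerivAt_id 1).mul_const c)
  have hg' : ∑ θ, h θ * log (h θ) - c ≠ 0 := by
    have hneg : ∑ θ, (h₀ θ - h θ) * log (h θ) = -(∑ θ, h θ * log (h θ) - c) := by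
      simp only [c, sub_mul, Finset.sum_sub_distrib]
      ring
    rwa [hneg, neg_ne_zero] at hderiv
  obtain ⟨α, hα, hlt⟩ := exists_lt_of_hasDerivAt_ne_zero hg hg' (Ici_mem_nhds zero_lt_one)
  refine ⟨α, hα, ?_⟩
  have hKL := sum_mul_log_div_rpow_div_sum_s6 hpos h₀sum
  have hKL₁ := hKL 1
  simp only [rpow_one, hsum, div_one, log_one] at hKL₁ hlt
  linarith [hKL α]

/-- Let `h₀` and `h` be strictly positive pmfs on a finite set, with
`h` not uniform, and suppose `Σ_θ [h₀(θ) − h(θ)]·log h(θ) ≠ 0`. Then there exists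
`α ≥ 0` with `KL(h₀ ‖ h^(α)) < KL(h₀ ‖ h)`, where `h^(α)(θ) = h(θ)^α / Σ h(θ')^α`. -/
theorem exists_alpha_scaled_closer
    {Θ : Type*} [Fintype Θ] [Nonempty Θ]
    (h₀ h : Θ → ℝ)
    (h₀pos : ∀ θ, 0 < h₀ θ)
    (hpos : ∀ θ, 0 < h θ)
    (h₀sum : ∑ θ, h₀ θ = 1)
    (hsum : ∑ θ, h θ = 1)
    (hnonunif : ∃ θ₁ θ₂, h θ₁ ≠ h θ₂)
    (hderiv : ∑ θ, (h₀ θ - h θ) * Real.log (h θ) ≠ 0) :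
    ∃ α : ℝ, 0 ≤ α ∧
      (∑ θ, h₀ θ * Real.log (h₀ θ / (h θ ^ α / ∑ θ', h θ' ^ α))) <
        ∑ θ, h₀ θ * Real.log (h₀ θ / h θ) :=
  exists_alpha_scaled_closer_general h₀ h hpos h₀sum hsum hderiv
end

section
/- Let Θ be a finite set, p a prior probability mass function on Θ, l a likelihood probability mass function on Θ (both strictly positive), and α₁, α₂, α₃ real numbers with α₁, α₂ ≥ 0 and α₃ < α₁ + α₂. Then the probability mass function q*(θ) ∝ p(θ)^{α₁/(α₁+α₂−α₃)} · l(θ)^{α₂/(α₁+α₂−α₃)} is the unique minimizer over all probability mass functions q on Θ of the objective α₁·KL(q‖p) + α₂·KL(q‖l) + α₃·Ent(q), where Ent(q) = −Σ q(θ) log q(θ). -/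
open Real BigOperators

private lemma mul_log_div_eq (q x : ℝ) (hq : 0 ≤ q) (hx : 0 < x) :
    q * Real.log (q / x) = q * Real.log q - q * Real.log x := by
  rcases eq_or_lt_of_le hq with h | h
  · simp [← h]
  · rw [Real.log_div (ne_of_gt h) (ne_of_gt hx)]; ring

private lemma gibbs_ineq {Θ : Type*} [Fintype Θ] (q r : Θ → ℝ)
    (hq : ∀ θ, 0 ≤ q θ) (hr : ∀ θ, 0 < r θ)
    (hqs : ∑ θ, q θ = 1) (hrs : ∑ θ, r θ = 1) :
    0 ≤ ∑ θ, q θ * Real.log (q θ / r θ) ∧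
    ((∑ θ, q θ * Real.log (q θ / r θ)) = 0 → q = r) := by
  have key : ∀ θ, 0 ≤ q θ * Real.log (q θ / r θ) - (q θ - r θ) := by
    intro θ
    rcases eq_or_lt_of_le (hq θ) with h | h
    · simp [← h]; exact (hr θ).le
    · have hlog : Real.log (r θ / q θ) ≤ r θ / q θ - 1 :=
        Real.log_le_sub_one_of_pos (div_pos (hr θ) h)
      rw [Real.log_div (ne_of_gt (hr θ)) (ne_of_gt h)] at hlog
      have := mul_le_mul_of_nonneg_left hlog (hq θ)
      have hcan : q θ * (r θ / q θ) = r θ := by field_simp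
      nlinarith [mul_log_div_eq (q θ) (r θ) (hq θ) (hr θ),
        Real.log_div (ne_of_gt h) (ne_of_gt (hr θ))]
  have hsum : ∑ θ, (q θ * Real.log (q θ / r θ) - (q θ - r θ)) =
      ∑ θ, q θ * Real.log (q θ / r θ) := by
    rw [Finset.sum_sub_distrib, Finset.sum_sub_distrib, hqs, hrs]; ring
  constructor
  · rw [← hsum]
    exact Finset.sum_nonneg fun θ _ => key θ
  · intro h0
    have hz : ∀ θ ∈ Finset.univ, (q θ * Real.log (q θ / r θ) - (q θ - r θ)) = 0 := by
      rw [← hsum] at h0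
      exact (Finset.sum_eq_zero_iff_of_nonneg (fun θ _ => key θ)).mp h0
    funext θ
    have hθ := hz θ (Finset.mem_univ θ)
    rcases eq_or_lt_of_le (hq θ) with h | h
    · exfalso; rw [← h] at hθ; simp at hθ; exact absurd hθ.symm (ne_of_lt (hr θ))
    · by_contra hne
      have hne' : r θ / q θ ≠ 1 := by
        intro h1
        exact hne ((div_eq_one_iff_eq (ne_of_gt h)).mp h1).symm
      have hlog : Real.log (r θ / q θ) < r θ / q θ - 1 :=
        Real.log_lt_sub_one_of_pos (div_pos (hr θ) h) hne'
      rw [Real.log_div (ne_of_gt (hr θ)) (ne_of_gt h)] at hlog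
      have := mul_lt_mul_of_pos_left hlog h
      have hcan : q θ * (r θ / q θ) = r θ := by field_simp
      nlinarith [mul_log_div_eq (q θ) (r θ) (hq θ) (hr θ),
        Real.log_div (ne_of_gt h) (ne_of_gt (hr θ))]

/-- On a finite set, for strictly positive prior `p` and likelihood `l`
and weights `α₁, α₂ ≥ 0`, `α₃ < α₁ + α₂`, the pmf
`q*(θ) ∝ p(θ)^{α₁/(α₁+α₂−α₃)} · l(θ)^{α₂/(α₁+α₂−α₃)}`
is the unique minimizer over pmfs `q` of
`α₁·KL(q‖p) + α₂·KL(q‖l) + α₃·Ent(q)`. -/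
theorem generalized_bayes_rule_minimizer
    {Θ : Type*} [Fintype Θ] [Nonempty Θ]
    (p l : Θ → ℝ)
    (hp : ∀ θ, 0 < p θ) (hl : ∀ θ, 0 < l θ)
    (hpsum : ∑ θ, p θ = 1) (hlsum : ∑ θ, l θ = 1)
    (α₁ α₂ α₃ : ℝ) (hα₁ : 0 ≤ α₁) (hα₂ : 0 ≤ α₂) (hα₃ : α₃ < α₁ + α₂)
    (qstar : Θ → ℝ)
    (hqstar : qstar = fun θ =>
      p θ ^ (α₁ / (α₁ + α₂ - α₃)) * l θ ^ (α₂ / (α₁ + α₂ - α₃)) /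
        ∑ θ', p θ' ^ (α₁ / (α₁ + α₂ - α₃)) * l θ' ^ (α₂ / (α₁ + α₂ - α₃)))
    (obj : (Θ → ℝ) → ℝ)
    (hobj : obj = fun q =>
      α₁ * (∑ θ, q θ * Real.log (q θ / p θ)) +
      α₂ * (∑ θ, q θ * Real.log (q θ / l θ)) +
      α₃ * (-∑ θ, q θ * Real.log (q θ))) :
    (∀ q : Θ → ℝ, (∀ θ, 0 ≤ q θ) → ∑ θ, q θ = 1 → obj qstar ≤ obj q) ∧
    (∀ q : Θ → ℝ, (∀ θ, 0 ≤ q θ) → ∑ θ, q θ = 1 →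
      obj q = obj qstar → q = qstar) := by
  set β := α₁ + α₂ - α₃ with hβdef
  have hβ : 0 < β := by linarith
  set a := α₁ / β with ha
  set b := α₂ / β with hb
  set Z := ∑ θ', p θ' ^ a * l θ' ^ b with hZdef
  have hterm : ∀ θ, 0 < p θ ^ a * l θ ^ b := fun θ =>
    mul_pos (Real.rpow_pos_of_pos (hp θ) a) (Real.rpow_pos_of_pos (hl θ) b)
  have hZ : 0 < Z := Finset.sum_pos (fun θ _ => hterm θ) Finset.univ_nonempty
  have hqpos : ∀ θ, 0 < qstar θ := by
    intro θ; rw [hqstar]; exact div_pos (hterm θ) hZ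
  have hqsum : ∑ θ, qstar θ = 1 := by
    rw [hqstar]
    simp only
    rw [← Finset.sum_div, ← hZdef, div_self (ne_of_gt hZ)]
  have hlogq : ∀ θ, Real.log (qstar θ) =
      a * Real.log (p θ) + b * Real.log (l θ) - Real.log Z := by
    intro θ
    rw [hqstar]
    simp only
    rw [Real.log_div (ne_of_gt (hterm θ)) (ne_of_gt hZ),
      Real.log_mul (ne_of_gt (Real.rpow_pos_of_pos (hp θ) a))
        (ne_of_gt (Real.rpow_pos_of_pos (hl θ) b)),
      Real.log_rpow (hp θ), Real.log_rpow (hl θ)]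
  -- key identity: obj q = β * KL(q‖qstar) - β * log Z  for any pmf q
  have hkey : ∀ q : Θ → ℝ, (∀ θ, 0 ≤ q θ) → ∑ θ, q θ = 1 →
      obj q = β * (∑ θ, q θ * Real.log (q θ / qstar θ)) - β * Real.log Z := by
    intro q hq hqs
    have hba : β * a = α₁ := by rw [ha]; field_simp
    have hbb : β * b = α₂ := by rw [hb]; field_simp
    have h1 : (∑ θ, q θ * Real.log (q θ / p θ)) =
        (∑ θ, q θ * Real.log (q θ)) - (∑ θ, q θ * Real.log (p θ)) := by
      rw [← Finset.sum_sub_distrib]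
      exact Finset.sum_congr rfl fun θ _ => mul_log_div_eq _ _ (hq θ) (hp θ)
    have h2 : (∑ θ, q θ * Real.log (q θ / l θ)) =
        (∑ θ, q θ * Real.log (q θ)) - (∑ θ, q θ * Real.log (l θ)) := by
      rw [← Finset.sum_sub_distrib]
      exact Finset.sum_congr rfl fun θ _ => mul_log_div_eq _ _ (hq θ) (hl θ)
    have h3 : (∑ θ, q θ * Real.log (q θ / qstar θ)) =
        (∑ θ, q θ * Real.log (q θ)) - (∑ θ, q θ * Real.log (qstar θ)) := by
      rw [← Finset.sum_sub_distrib]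
      exact Finset.sum_congr rfl fun θ _ => mul_log_div_eq _ _ (hq θ) (hqpos θ)
    have hQ : (∑ θ, q θ * Real.log (qstar θ)) =
        a * (∑ θ, q θ * Real.log (p θ)) + b * (∑ θ, q θ * Real.log (l θ))
          - Real.log Z := by
      have e : ∀ θ, q θ * Real.log (qstar θ) =
          a * (q θ * Real.log (p θ)) + b * (q θ * Real.log (l θ))
            - q θ * Real.log Z := by
        intro θ; rw [hlogq θ]; ring
      rw [Finset.sum_congr rfl fun θ _ => e θ, Finset.sum_sub_distrib,
        Finset.sum_add_distrib, ← Finset.mul_sum, ← Finset.mul_sum,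
        ← Finset.sum_mul, hqs, one_mul]
    rw [hobj]
    simp only
    rw [h1, h2, h3, hQ]
    set S := ∑ θ, q θ * Real.log (q θ)
    set P := ∑ θ, q θ * Real.log (p θ)
    set L := ∑ θ, q θ * Real.log (l θ)
    linear_combination P * hba + L * hbb - S * hβdef
  have hklstar : (∑ θ, qstar θ * Real.log (qstar θ / qstar θ)) = 0 := by
    apply Finset.sum_eq_zero
    intro θ _
    rw [div_self (ne_of_gt (hqpos θ))]
    simp
  constructor
  · intro q hq hqs
    rw [hkey q hq hqs, hkey qstar (fun θ => (hqpos θ).le) hqsum, hklstar]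
    have := (gibbs_ineq q qstar hq hqpos hqs hqsum).1
    nlinarith
  · intro q hq hqs heq
    rw [hkey q hq hqs, hkey qstar (fun θ => (hqpos θ).le) hqsum, hklstar] at heq
    have hk0 : (∑ θ, q θ * Real.log (q θ / qstar θ)) = 0 := by
      have h : β * (∑ θ, q θ * Real.log (q θ / qstar θ)) = β * 0 := by
        rw [mul_zero]; linarith
      exact mul_left_cancel₀ (ne_of_gt hβ) (by rw [h, mul_zero])
    exact (gibbs_ineq q qstar hq hqpos hqs hqsum).2 hk0
end

section
/- For any two probability mass functions p₀ and p on a finite set S, and any function c : S → ℝ with |c(s)| ≤ M for all s, |Σ_s c(s) p₀(s) − Σ_s c(s) p(s)| ≤ 2M·√(1 − exp(−KL(p₀ ‖ p))). -/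
/-!
Write `δ = ½ ∑ |p₀ - p|`, so that `∑ min (p₀, p) = 1 - δ` and `∑ max (p₀, p) = 1 + δ`.
Jensen's inequality for `exp`, with weights `p₀`, bounds `exp (-KL / 2)` by the Bhattacharyya
coefficient `∑ √(p₀ p)`; writing `√(p₀ p) = √min · √max`, Cauchy–Schwarz bounds its square by
`(1 - δ)(1 + δ)`. Hence `exp (-KL) ≤ 1 - δ²`, i.e. `δ ≤ √(1 - exp (-KL))` (Bretagnolle–Huber),
while the expectation gap is at most `M ∑ |p₀ - p| = 2 M δ`.
-/

open Real BigOperators Finset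

section

variable {S : Type*} [Fintype S]

noncomputable def discreteKLDiv (p₀ p : S → ℝ) : ℝ :=
  ∑ s, p₀ s * log (p₀ s / p s)

theorem abs_sum_mul_sub_sum_mul_le (c q q' : S → ℝ) {M : ℝ} (hc : ∀ s, |c s| ≤ M) :
    |∑ s, c s * q s - ∑ s, c s * q' s| ≤ M * ∑ s, |q s - q' s| :=
  calc |∑ s, c s * q s - ∑ s, c s * q' s|
      = |∑ s, c s * (q s - q' s)| := by simp only [mul_sub, sum_sub_distrib]
    _ ≤ ∑ s, |c s * (q s - q' s)| := abs_sum_le_sum_abs _ _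
    _ ≤ ∑ s, M * |q s - q' s| := sum_le_sum fun s _ => by
        rw [abs_mul]; exact mul_le_mul_of_nonneg_right (hc s) (abs_nonneg _)
    _ = M * ∑ s, |q s - q' s| := (mul_sum _ _ _).symm

theorem mul_exp_neg_half_log_div_eq_sqrt_mul {a b : ℝ} (ha : 0 ≤ a) (hab : 0 < a → 0 < b) :
    a * exp (-(log (a / b) / 2)) = √(a * b) := by
  rcases ha.eq_or_lt with rfl | ha
  · simp
  have hb := hab ha
  have hab' := mul_pos ha hb
  rw [← exp_log (sqrt_pos.2 hab'), log_sqrt hab'.le, log_mul ha.ne' hb.ne', log_div ha.ne' hb.ne']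
  nth_rw 1 [← exp_log ha]
  rw [← exp_add]
  ring_nf

theorem exp_neg_half_discreteKLDiv_le_sum_sqrt_mul {p₀ p : S → ℝ} (hp₀ : ∀ s, 0 ≤ p₀ s)
    (habs : ∀ s, 0 < p₀ s → 0 < p s) (hp₀sum : ∑ s, p₀ s = 1) :
    exp (-(discreteKLDiv p₀ p / 2)) ≤ ∑ s, √(p₀ s * p s) := by
  have hmean : ∑ s, p₀ s • -(log (p₀ s / p s) / 2) = -(discreteKLDiv p₀ p / 2) := by
    simp only [discreteKLDiv, smul_eq_mul, sum_div, ← sum_neg_distrib, mul_neg, mul_div_assoc]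
  calc exp (-(discreteKLDiv p₀ p / 2))
      ≤ ∑ s, p₀ s • exp (-(log (p₀ s / p s) / 2)) := by
        rw [← hmean]
        exact convexOn_exp.map_sum_le (fun s _ => hp₀ s) hp₀sum (fun s _ => Set.mem_univ _)
    _ = ∑ s, √(p₀ s * p s) :=
        sum_congr rfl fun s _ => mul_exp_neg_half_log_div_eq_sqrt_mul (hp₀ s) (habs s)

theorem sum_sqrt_mul_sq_le_sum_min_mul_sum_max {p₀ p : S → ℝ} (hp₀ : ∀ s, 0 ≤ p₀ s)
    (hp : ∀ s, 0 ≤ p s) :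
    (∑ s, √(p₀ s * p s)) ^ 2 ≤ (∑ s, min (p₀ s) (p s)) * ∑ s, max (p₀ s) (p s) := by
  have hmin (s : S) : 0 ≤ min (p₀ s) (p s) := le_min (hp₀ s) (hp s)
  have hmax (s : S) : 0 ≤ max (p₀ s) (p s) := (hp₀ s).trans (le_max_left _ _)
  have hsplit (s : S) : √(p₀ s * p s) = √(min (p₀ s) (p s)) * √(max (p₀ s) (p s)) := by
    rw [← sqrt_mul (hmin s), min_mul_max]
  simpa only [hsplit, sq_sqrt (hmin _), sq_sqrt (hmax _)] using
    sum_mul_sq_le_sq_mul_sq univ (fun s => √(min (p₀ s) (p s))) (fun s => √(max (p₀ s) (p s)))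

theorem sum_abs_sub_le_two_mul_sqrt_one_sub_exp_neg_discreteKLDiv {p₀ p : S → ℝ}
    (hp₀ : ∀ s, 0 ≤ p₀ s) (hp : ∀ s, 0 ≤ p s) (habs : ∀ s, 0 < p₀ s → 0 < p s)
    (hp₀sum : ∑ s, p₀ s = 1) (hpsum : ∑ s, p s = 1) :
    ∑ s, |p₀ s - p s| ≤ 2 * √(1 - exp (-discreteKLDiv p₀ p)) := by
  obtain ⟨δ, hδ⟩ : ∃ δ, ∑ s, |p₀ s - p s| = 2 * δ := ⟨_, (mul_div_cancel₀ _ two_ne_zero).symm⟩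
  have hmin_add_max : ∑ s, min (p₀ s) (p s) + ∑ s, max (p₀ s) (p s) = 2 := by
    rw [← sum_add_distrib]; simp only [min_add_max, sum_add_distrib, hp₀sum, hpsum]; norm_num
  have hmax_sub_min : ∑ s, max (p₀ s) (p s) - ∑ s, min (p₀ s) (p s) = 2 * δ := by
    rw [← sum_sub_distrib, ← hδ]; simp only [max_sub_min_eq_abs, abs_sub_comm]
  have hexp : exp (-discreteKLDiv p₀ p) ≤ 1 - δ ^ 2 :=
    calc exp (-discreteKLDiv p₀ p) = exp (-(discreteKLDiv p₀ p / 2)) ^ 2 := by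
          rw [← exp_nat_mul]; ring_nf
      _ ≤ (∑ s, √(p₀ s * p s)) ^ 2 := by
          gcongr; exact exp_neg_half_discreteKLDiv_le_sum_sqrt_mul hp₀ habs hp₀sum
      _ ≤ (∑ s, min (p₀ s) (p s)) * ∑ s, max (p₀ s) (p s) :=
          sum_sqrt_mul_sq_le_sum_min_mul_sum_max hp₀ hp
      _ = 1 - δ ^ 2 := by
          rw [show ∑ s, min (p₀ s) (p s) = 1 - δ by linarith,
            show ∑ s, max (p₀ s) (p s) = 1 + δ by linarith]
          ring
  have hδ_le : δ ≤ √(1 - exp (-discreteKLDiv p₀ p)) :=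
    (le_abs_self δ).trans (abs_le_sqrt (by linarith))
  linarith

end

/-- For pmfs `p₀, p` on a finite set `S` (with `p(s) > 0` whenever
`p₀(s) > 0`) and `c : S → ℝ` with `|c(s)| ≤ M`,
`|Σ c p₀ − Σ c p| ≤ 2M·√(1 − exp(−KL(p₀‖p)))` (Bretagnolle–Huber bound). -/
theorem expectation_gap_bretagnolle_huber
    {S : Type*} [Fintype S]
    (p₀ p : S → ℝ)
    (hp₀ : ∀ s, 0 ≤ p₀ s) (hp : ∀ s, 0 ≤ p s)
    (habs : ∀ s, 0 < p₀ s → 0 < p s)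
    (hp₀sum : ∑ s, p₀ s = 1) (hpsum : ∑ s, p s = 1)
    (c : S → ℝ) (M : ℝ) (hM : 0 ≤ M)
    (hc : ∀ s, |c s| ≤ M) :
    |(∑ s, c s * p₀ s) - ∑ s, c s * p s| ≤
      2 * M * Real.sqrt (1 - Real.exp (-(∑ s, p₀ s * Real.log (p₀ s / p s)))) :=
  calc |(∑ s, c s * p₀ s) - ∑ s, c s * p s| ≤ M * ∑ s, |p₀ s - p s| :=
        abs_sum_mul_sub_sum_mul_le c p₀ p hc
    _ ≤ M * (2 * √(1 - exp (-discreteKLDiv p₀ p))) := by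
        gcongr
        exact sum_abs_sub_le_two_mul_sqrt_one_sub_exp_neg_discreteKLDiv hp₀ hp habs hp₀sum hpsum
    _ = 2 * M * Real.sqrt (1 - Real.exp (-(∑ s, p₀ s * Real.log (p₀ s / p s)))) := by
        rw [discreteKLDiv]; ring
end

section
/- Let Θ be a finite set, let p₁, …, p_m be strictly positive probability mass functions on Θ (priors) with weights β₁, …, β_m ≥ 0 summing to 1, let l₁, …, l_n be strictly positive probability mass functions on Θ (likelihood distributions), and let α₁, α₂ ≥ 0 and α₃ ∈ ℝ with α₃ < α₁ + α₂. Then the unique minimizer over probability mass functions q of α₃·Ent(q) + α₁·Σᵢ βᵢ·KL(q‖pᵢ) + (α₂/n)·Σᵢ KL(q‖lᵢ) is q*(θ) ∝ [Πᵢ pᵢ(θ)^{βᵢ}]^{α₁/(α₁+α₂−α₃)} · [Πᵢ lᵢ(θ)^{1/n}]^{α₂/(α₁+α₂−α₃)}. -/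
open Real BigOperators

/-!
With `c = α₁ + α₂ − α₃ > 0`, the unnormalised density `w = ∏ pᵢ^{βᵢ α₁/c} · ∏ lᵢ^{α₂/(n c)}`
satisfies `c · log w = α₁ Σᵢ βᵢ log pᵢ + (α₂/n) Σᵢ log lᵢ`. Expanding every KL term as
`Σ q log q − Σ q log r` and using `Σ βᵢ = 1`, the objective becomes
`c · (Σ q log q − Σ q log w) = c · KL(q‖w/Z) − c · log Z`, so Gibbs' inequality gives the unique
minimiser `q* = w/Z`.
-/

open Finset InformationTheory

section RelEntropy

variable {Θ : Type*} [Fintype Θ]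

/-- `KL(q‖r)`. Only meaningful for positive `r`: where `r θ = 0 < q θ` the term is the junk value
`q θ * log 0 = 0` instead of `∞`. -/
noncomputable def relEntropy (q r : Θ → ℝ) : ℝ := ∑ θ, q θ * log (q θ / r θ)

lemma relEntropy_self (q : Θ → ℝ) : relEntropy q q = 0 :=
  sum_eq_zero fun θ _ => by by_cases h : q θ = 0 <;> simp [h]

lemma relEntropy_eq_sum_mul_log_sub {q r : Θ → ℝ} (hr : ∀ θ, r θ ≠ 0) :
    relEntropy q r = ∑ θ, q θ * log (q θ) - ∑ θ, q θ * log (r θ) := by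
  rw [relEntropy, ← sum_sub_distrib]
  refine sum_congr rfl fun θ _ => ?_
  by_cases hq : q θ = 0
  · simp [hq]
  · rw [log_div hq (hr θ)]; ring

lemma relEntropy_eq_sum_mul_klFun {q r : Θ → ℝ} (hr : ∀ θ, 0 < r θ)
    (hsum : ∑ θ, q θ = ∑ θ, r θ) :
    relEntropy q r = ∑ θ, r θ * klFun (q θ / r θ) := by
  have h θ : r θ * klFun (q θ / r θ) = q θ * log (q θ / r θ) + (r θ - q θ) := by
    rw [klFun]; field_simp [(hr θ).ne']; ring
  simp only [h, sum_add_distrib, sum_sub_distrib, hsum, sub_self, add_zero, relEntropy]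

lemma relEntropy_nonneg {q r : Θ → ℝ} (hq : ∀ θ, 0 ≤ q θ) (hr : ∀ θ, 0 < r θ)
    (hsum : ∑ θ, q θ = ∑ θ, r θ) : 0 ≤ relEntropy q r := by
  rw [relEntropy_eq_sum_mul_klFun hr hsum]
  exact sum_nonneg fun θ _ => mul_nonneg (hr θ).le (klFun_nonneg (div_nonneg (hq θ) (hr θ).le))

lemma eq_of_relEntropy_eq_zero {q r : Θ → ℝ} (hq : ∀ θ, 0 ≤ q θ) (hr : ∀ θ, 0 < r θ)
    (hsum : ∑ θ, q θ = ∑ θ, r θ) (h : relEntropy q r = 0) : q = r := by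
  rw [relEntropy_eq_sum_mul_klFun hr hsum, sum_eq_zero_iff_of_nonneg fun θ _ =>
    mul_nonneg (hr θ).le (klFun_nonneg (div_nonneg (hq θ) (hr θ).le))] at h
  funext θ
  have hθ := h θ (mem_univ θ)
  rwa [mul_eq_zero, or_iff_right (hr θ).ne', klFun_eq_zero_iff (div_nonneg (hq θ) (hr θ).le),
    div_eq_one_iff_eq (hr θ).ne'] at hθ

lemma sum_mul_relEntropy {ι : Type*} [Fintype ι] (a : ι → ℝ) (q : Θ → ℝ) {r : ι → Θ → ℝ}
    (hr : ∀ i θ, r i θ ≠ 0) :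
    ∑ i, a i * relEntropy q (r i) =
      (∑ i, a i) * ∑ θ, q θ * log (q θ) - ∑ θ, q θ * ∑ i, a i * log (r i θ) := by
  simp only [relEntropy_eq_sum_mul_log_sub (hr _), mul_sub, sum_sub_distrib, ← sum_mul]
  simp only [mul_sum]
  exact congrArg _ (sum_comm.trans (sum_congr rfl fun θ _ => sum_congr rfl fun i _ => by ring))

lemma sum_mul_log_sub_sum_mul_log_eq_relEntropy_sub [Nonempty Θ] {q w : Θ → ℝ}
    (hw : ∀ θ, 0 < w θ) (hq : ∑ θ, q θ = 1) :
    ∑ θ, q θ * log (q θ) - ∑ θ, q θ * log (w θ) =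
      relEntropy q (fun θ => w θ / ∑ θ', w θ') - log (∑ θ, w θ) := by
  have hZ : 0 < ∑ θ, w θ := sum_pos (fun θ _ => hw θ) univ_nonempty
  rw [relEntropy_eq_sum_mul_log_sub fun θ => (div_pos (hw θ) hZ).ne']
  simp only [log_div (hw _).ne' hZ.ne', mul_sub, sum_sub_distrib, ← sum_mul, hq]
  ring

lemma unique_argmin_of_eq_mul_relEntropy_add {f : (Θ → ℝ) → ℝ} {r : Θ → ℝ} {c K : ℝ}
    (hc : 0 < c) (hr : ∀ θ, 0 < r θ) (hr1 : ∑ θ, r θ = 1)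
    (hf : ∀ q, (∀ θ, 0 ≤ q θ) → ∑ θ, q θ = 1 → f q = c * relEntropy q r - K) :
    (∀ q : Θ → ℝ, (∀ θ, 0 ≤ q θ) → ∑ θ, q θ = 1 → f r ≤ f q) ∧
    (∀ q : Θ → ℝ, (∀ θ, 0 ≤ q θ) → ∑ θ, q θ = 1 → f q = f r → q = r) := by
  have hfr : f r = -K := by
    rw [hf r (fun θ => (hr θ).le) hr1, relEntropy_self, mul_zero, zero_sub]
  refine ⟨fun q hq hq1 => ?_, fun q hq hq1 hqr => ?_⟩
  · rw [hfr, hf q hq hq1]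
    linarith [mul_nonneg hc.le (relEntropy_nonneg hq hr (hq1.trans hr1.symm))]
  · refine eq_of_relEntropy_eq_zero hq hr (hq1.trans hr1.symm) ?_
    rw [hfr, hf q hq hq1, sub_eq_neg_self, mul_eq_zero] at hqr
    exact hqr.resolve_left hc.ne'

end RelEntropy

lemma log_prod_rpow {ι : Type*} (s : Finset ι) {x : ι → ℝ} (hx : ∀ i ∈ s, 0 < x i) (a : ι → ℝ) :
    log (∏ i ∈ s, x i ^ a i) = ∑ i ∈ s, a i * log (x i) := by
  rw [log_prod fun i hi => (rpow_pos_of_pos (hx i hi) _).ne']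
  exact sum_congr rfl fun i hi => log_rpow (hx i hi) _

section GeneralizedBayes

variable {Θ ι : Type*} [Fintype ι] {n : ℕ}
  (α₁ α₂ α₃ : ℝ) (β : ι → ℝ) (p : ι → Θ → ℝ) (l : Fin n → Θ → ℝ)

noncomputable def generalizedBayesWeight (θ : Θ) : ℝ :=
  (∏ i, p i θ ^ β i) ^ (α₁ / (α₁ + α₂ - α₃)) *
    (∏ i, l i θ ^ ((1:ℝ) / n)) ^ (α₂ / (α₁ + α₂ - α₃))

noncomputable def generalizedBayesObjective [Fintype Θ] (q : Θ → ℝ) : ℝ :=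
  α₃ * (-∑ θ, q θ * log (q θ)) + α₁ * ∑ i, β i * relEntropy q (p i) +
    α₂ / n * ∑ i, relEntropy q (l i)

variable {α₁ α₂ α₃ β p l}

lemma generalizedBayesWeight_pos (hp : ∀ i θ, 0 < p i θ) (hl : ∀ i θ, 0 < l i θ) (θ : Θ) :
    0 < generalizedBayesWeight α₁ α₂ α₃ β p l θ :=
  mul_pos (rpow_pos_of_pos (prod_pos fun i _ => rpow_pos_of_pos (hp i θ) _) _)
    (rpow_pos_of_pos (prod_pos fun i _ => rpow_pos_of_pos (hl i θ) _) _)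

lemma mul_log_generalizedBayesWeight (hp : ∀ i θ, 0 < p i θ) (hl : ∀ i θ, 0 < l i θ)
    (hc : α₁ + α₂ - α₃ ≠ 0) (θ : Θ) :
    (α₁ + α₂ - α₃) * log (generalizedBayesWeight α₁ α₂ α₃ β p l θ) =
      α₁ * ∑ i, β i * log (p i θ) + α₂ / n * ∑ i, log (l i θ) := by
  have hpprod : 0 < ∏ i, p i θ ^ β i := prod_pos fun i _ => rpow_pos_of_pos (hp i θ) _
  have hlprod : 0 < ∏ i, l i θ ^ ((1:ℝ) / n) := prod_pos fun i _ => rpow_pos_of_pos (hl i θ) _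
  rw [generalizedBayesWeight,
    log_mul (rpow_pos_of_pos hpprod _).ne' (rpow_pos_of_pos hlprod _).ne',
    log_rpow hpprod, log_rpow hlprod, log_prod_rpow _ (fun i _ => hp i θ),
    log_prod_rpow _ (fun i _ => hl i θ), mul_add, ← mul_assoc, ← mul_assoc,
    mul_div_cancel₀ _ hc, mul_div_cancel₀ _ hc, ← mul_sum]
  ring

lemma generalizedBayesObjective_eq [Fintype Θ] [Nonempty Θ] (hn : n ≠ 0) (hp : ∀ i θ, 0 < p i θ)
    (hl : ∀ i θ, 0 < l i θ) (hβsum : ∑ i, β i = 1) (hc : α₁ + α₂ - α₃ ≠ 0) {q : Θ → ℝ}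
    (hq1 : ∑ θ, q θ = 1) :
    generalizedBayesObjective α₁ α₂ α₃ β p l q =
      (α₁ + α₂ - α₃) * relEntropy q (fun θ => generalizedBayesWeight α₁ α₂ α₃ β p l θ /
        ∑ θ', generalizedBayesWeight α₁ α₂ α₃ β p l θ') -
      (α₁ + α₂ - α₃) * log (∑ θ, generalizedBayesWeight α₁ α₂ α₃ β p l θ) := by
  have hw : ∀ θ, 0 < generalizedBayesWeight α₁ α₂ α₃ β p l θ := generalizedBayesWeight_pos hp hl
  have hgibbs := sum_mul_log_sub_sum_mul_log_eq_relEntropy_sub hw hq1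
  have hprior := sum_mul_relEntropy β q fun i θ => (hp i θ).ne'
  have hsample := sum_mul_relEntropy (fun _ => α₂ / n) q fun i θ => (hl i θ).ne'
  have hcross : (α₁ + α₂ - α₃) * ∑ θ, q θ * log (generalizedBayesWeight α₁ α₂ α₃ β p l θ) =
      α₁ * ∑ θ, q θ * ∑ i, β i * log (p i θ) + ∑ θ, q θ * (α₂ / n * ∑ i, log (l i θ)) := by
    simp only [mul_sum, mul_left_comm (α₁ + α₂ - α₃), mul_log_generalizedBayesWeight hp hl hc,
      mul_add, ← sum_add_distrib, mul_left_comm α₁]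
  simp only [hβsum, one_mul, sum_const, card_univ, Fintype.card_fin, nsmul_eq_mul, ← mul_sum,
    mul_div_cancel₀ _ (Nat.cast_ne_zero.2 hn : (n : ℝ) ≠ 0)] at hprior hsample
  rw [generalizedBayesObjective, hprior, hsample]
  linear_combination (α₁ + α₂ - α₃) * hgibbs + hcross

end GeneralizedBayes

theorem multi_prior_multi_sample_generalized_bayes_general
    {Θ : Type*} [Fintype Θ] [Nonempty Θ]
    {m n : ℕ} (hn : 0 < n)
    (p : Fin m → Θ → ℝ) (l : Fin n → Θ → ℝ)
    (hp : ∀ i θ, 0 < p i θ) (hl : ∀ i θ, 0 < l i θ)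
    (β : Fin m → ℝ) (hβsum : ∑ i, β i = 1)
    (α₁ α₂ α₃ : ℝ) (hα₃ : α₃ < α₁ + α₂)
    (qstar : Θ → ℝ)
    (hqstar : qstar = fun θ =>
      ((∏ i, p i θ ^ β i) ^ (α₁ / (α₁ + α₂ - α₃)) *
        (∏ i, l i θ ^ ((1:ℝ) / n)) ^ (α₂ / (α₁ + α₂ - α₃))) /
      ∑ θ', (∏ i, p i θ' ^ β i) ^ (α₁ / (α₁ + α₂ - α₃)) *
        (∏ i, l i θ' ^ ((1:ℝ) / n)) ^ (α₂ / (α₁ + α₂ - α₃)))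
    (obj : (Θ → ℝ) → ℝ)
    (hobj : obj = fun q =>
      α₃ * (-∑ θ, q θ * Real.log (q θ)) +
      α₁ * (∑ i, β i * ∑ θ, q θ * Real.log (q θ / p i θ)) +
      (α₂ / n) * (∑ i, ∑ θ, q θ * Real.log (q θ / l i θ))) :
    (∀ q : Θ → ℝ, (∀ θ, 0 ≤ q θ) → ∑ θ, q θ = 1 → obj qstar ≤ obj q) ∧
    (∀ q : Θ → ℝ, (∀ θ, 0 ≤ q θ) → ∑ θ, q θ = 1 →
      obj q = obj qstar → q = qstar) := by
  have hc : 0 < α₁ + α₂ - α₃ := sub_pos.2 hα₃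
  have hw : ∀ θ, 0 < generalizedBayesWeight α₁ α₂ α₃ β p l θ := generalizedBayesWeight_pos hp hl
  obtain rfl : qstar = fun θ => generalizedBayesWeight α₁ α₂ α₃ β p l θ /
      ∑ θ', generalizedBayesWeight α₁ α₂ α₃ β p l θ' := hqstar
  obtain rfl : obj = generalizedBayesObjective α₁ α₂ α₃ β p l := hobj
  have hZ : 0 < ∑ θ, generalizedBayesWeight α₁ α₂ α₃ β p l θ :=
    sum_pos (fun θ _ => hw θ) univ_nonempty
  exact unique_argmin_of_eq_mul_relEntropy_add hc (fun θ => div_pos (hw θ) hZ)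
    (by rw [← sum_div, div_self hZ.ne'])
    fun _ _ hq1 => generalizedBayesObjective_eq hn.ne' hp hl hβsum hc.ne' hq1

/-- Multi-prior, multi-sample generalized Bayes' rule on a finite set:
the unique minimizer over pmfs `q` of
`α₃·Ent(q) + α₁·Σᵢ βᵢ·KL(q‖pᵢ) + (α₂/n)·Σᵢ KL(q‖lᵢ)` is
`q*(θ) ∝ [Πᵢ pᵢ(θ)^{βᵢ}]^{α₁/(α₁+α₂−α₃)} · [Πᵢ lᵢ(θ)^{1/n}]^{α₂/(α₁+α₂−α₃)}`. -/
theorem multi_prior_multi_sample_generalized_bayes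
    {Θ : Type*} [Fintype Θ] [Nonempty Θ]
    {m n : ℕ} (hm : 0 < m) (hn : 0 < n)
    (p : Fin m → Θ → ℝ) (l : Fin n → Θ → ℝ)
    (hp : ∀ i θ, 0 < p i θ) (hl : ∀ i θ, 0 < l i θ)
    (hpsum : ∀ i, ∑ θ, p i θ = 1) (hlsum : ∀ i, ∑ θ, l i θ = 1)
    (β : Fin m → ℝ) (hβ : ∀ i, 0 ≤ β i) (hβsum : ∑ i, β i = 1)
    (α₁ α₂ α₃ : ℝ) (hα₁ : 0 ≤ α₁) (hα₂ : 0 ≤ α₂) (hα₃ : α₃ < α₁ + α₂)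
    (qstar : Θ → ℝ)
    (hqstar : qstar = fun θ =>
      ((∏ i, p i θ ^ β i) ^ (α₁ / (α₁ + α₂ - α₃)) *
        (∏ i, l i θ ^ ((1:ℝ) / n)) ^ (α₂ / (α₁ + α₂ - α₃))) /
      ∑ θ', (∏ i, p i θ' ^ β i) ^ (α₁ / (α₁ + α₂ - α₃)) *
        (∏ i, l i θ' ^ ((1:ℝ) / n)) ^ (α₂ / (α₁ + α₂ - α₃)))
    (obj : (Θ → ℝ) → ℝ)
    (hobj : obj = fun q =>
      α₃ * (-∑ θ, q θ * Real.log (q θ)) +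
      α₁ * (∑ i, β i * ∑ θ, q θ * Real.log (q θ / p i θ)) +
      (α₂ / n) * (∑ i, ∑ θ, q θ * Real.log (q θ / l i θ))) :
    (∀ q : Θ → ℝ, (∀ θ, 0 ≤ q θ) → ∑ θ, q θ = 1 → obj qstar ≤ obj q) ∧
    (∀ q : Θ → ℝ, (∀ θ, 0 ≤ q θ) → ∑ θ, q θ = 1 →
      obj q = obj qstar → q = qstar) :=
  multi_prior_multi_sample_generalized_bayes_general hn p l hp hl β hβsum α₁ α₂ α₃ hα₃ qstar hqstar
    obj hobj
end
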